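/- arXiv:1710.08654 — 4 statements merged into one kernel-verified Lean document; each statement's English description precedes it below -/
import Mathlib

section
/- Let Ω = {(x,1): x∈[0,1]} ∪ {(1,y): y∈[0,1]} and let ⟨f,g⟩ = ∫₀¹ f(x,1)g(x,1)w₁(x)dx + ∫₀¹ f(1,y)g(1,y)w₂(y)dy. Then the space of polynomials of degree n orthogonal (with respect to this form) to all polynomials of lower degree, in the quotient ring ℝ[x,y]/⟨(1-x)(1-y)⟩, has dimension 1 for n=0 and dimension 2 for each n ≥ 1. -/
open MeasureTheory MvPolynomial

noncomputable section

/-- The polynomial ring `ℝ[x,y]`. -/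
abbrev R2 := MvPolynomial (Fin 2) ℝ

/-- The ideal generated by `(1-x)(1-y)`. -/
def wedgeIdeal : Ideal R2 := Ideal.span {(1 - X 0) * (1 - X 1)}

/-- Evaluation of a bivariate polynomial. -/
def ev (p : R2) (a b : ℝ) : ℝ := eval ![a, b] p

/-- The wedge bilinear form `⟨f,g⟩ = ∫₀¹ f(x,1)g(x,1)w₁(x)dx + ∫₀¹ f(1,y)g(1,y)w₂(y)dy`. -/
def wedgeForm (w1 w2 : ℝ → ℝ) (f g : R2) : ℝ :=
  (∫ x in (0:ℝ)..1, ev f x 1 * ev g x 1 * w1 x) +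
  (∫ y in (0:ℝ)..1, ev f 1 y * ev g 1 y * w2 y)

/-- The set of orthogonal polynomials of degree `n` in the quotient `ℝ[x,y]/⟨(1-x)(1-y)⟩`:
elements represented by a polynomial of degree at most `n` orthogonal to every polynomial
of degree less than `n`. -/
def wedgeOP (w1 w2 : ℝ → ℝ) (n : ℕ) : Set (R2 ⧸ wedgeIdeal) :=
  {q | ∃ p : R2, Ideal.Quotient.mk wedgeIdeal p = q ∧ p.totalDegree ≤ n ∧
        ∀ r : R2, r.totalDegree < n → wedgeForm w1 w2 p r = 0}

/-!
Restricting to the two edges identifies `ℝ[x,y]/⟨(1-x)(1-y)⟩` with the pairs `(P, Q)` of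
univariate polynomials with `P(1) = Q(1)`, and the form becomes `J₁(P R₁) + J₂(Q R₂)` with
`Jₖ F = ∫₀¹ F wₖ`. Testing against `1`, `xⁱ - 1` and `yⁱ - 1` shows that `(P, Q)` is orthogonal
of degree `n ≥ 1` iff `P` is `J₁`-orthogonal to the polynomials of degree `< n` vanishing at `1`,
likewise `Q` for `J₂`, and `J₁ P + J₂ Q = 0`. Such a `P` of degree `≤ n` is determined by
`(P(1), J₁ P)`: if both vanish, then `P = (x - 1) R` with `deg R < n`, so `J₁((1 - x) R²) = 0`,
which forces `R = 0` by positivity. Counting `n + 1` coefficients against `n - 1` orthogonality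
conditions, every value of `(P(1), J₁ P)` is attained, so the orthogonal elements are
parametrised by `(P(1), J₁ P) ∈ ℝ²`.
-/

open Function

namespace Polynomial

section EdgeSpace

variable (J : ℝ[X] →ₗ[ℝ] ℝ) (n : ℕ)

/-- Row `i` pairs a polynomial with `X ^ (i + 1) - 1`, so the kernel consists of the polynomials
`J`-orthogonal to every polynomial of degree `< n` vanishing at `1`. -/
def edgeOrthMap : ℝ[X] →ₗ[ℝ] Fin (n - 1) → ℝ :=
  LinearMap.pi fun i => J ∘ₗ LinearMap.mulRight ℝ (X ^ ((i : ℕ) + 1) - 1)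

def edgeSpace : Submodule ℝ ℝ[X] :=
  degreeLT ℝ (n + 1) ⊓ LinearMap.ker (edgeOrthMap J n)

def edgeData : edgeSpace J n →ₗ[ℝ] ℝ × ℝ :=
  ((leval 1).prod J) ∘ₗ (edgeSpace J n).subtype

variable {J n}

theorem mem_edgeSpace_iff {P : ℝ[X]} :
    P ∈ edgeSpace J n ↔ P.natDegree ≤ n ∧ P ∈ LinearMap.ker (edgeOrthMap J n) := by
  rw [edgeSpace, Submodule.mem_inf, degreeLT_succ_eq_degreeLE, mem_degreeLE,
    natDegree_le_iff_degree_le]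

theorem edgeData_apply (P : edgeSpace J n) : edgeData J n P = ((P : ℝ[X]).eval 1, J P) := rfl

theorem map_mul_X_pow_of_mem_ker {P : ℝ[X]} (hP : P ∈ LinearMap.ker (edgeOrthMap J n)) {k : ℕ}
    (hk : k < n) : J (P * X ^ k) = J P := by
  obtain _ | i := k
  · simp
  · have := congrFun hP ⟨i, by omega⟩
    simpa [edgeOrthMap, mul_sub, sub_eq_zero] using this

theorem map_mul_of_mem_ker {P A : ℝ[X]} (hP : P ∈ LinearMap.ker (edgeOrthMap J n))
    (hA : A.natDegree < n) : J (P * A) = A.eval 1 * J P := by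
  conv_lhs => rw [A.as_sum_range_C_mul_X_pow' hA]
  rw [eval_eq_sum_range' hA, Finset.sum_mul, Finset.mul_sum, map_sum]
  refine Finset.sum_congr rfl fun k hk => ?_
  rw [mul_left_comm, ← smul_eq_C_mul, map_smul, map_mul_X_pow_of_mem_ker hP (Finset.mem_range.1 hk)]
  simp

variable (hJ : ∀ R : ℝ[X], R ≠ 0 → 0 < J ((1 - X) * R ^ 2))
include hJ

theorem eq_zero_of_mem_edgeSpace {P : ℝ[X]} (hP : P ∈ edgeSpace J n) (h1 : P.eval 1 = 0)
    (h2 : J P = 0) : P = 0 := by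
  rw [mem_edgeSpace_iff] at hP
  obtain ⟨R, rfl⟩ : X - C 1 ∣ P := dvd_iff_isRoot.mpr h1
  by_contra hP0
  have hR : R ≠ 0 := right_ne_zero_of_mul hP0
  have hdeg : R.natDegree < n := by
    have := hP.1
    rw [natDegree_mul (X_sub_C_ne_zero 1) hR, natDegree_X_sub_C] at this
    omega
  have hzero : J ((1 - X) * R ^ 2) = 0 := by
    have := map_mul_of_mem_ker hP.2 hdeg
    rw [h2, mul_zero] at this
    rw [show (1 - X) * R ^ 2 = -((X - C 1) * R * R) by simp only [map_one]; ring, map_neg, this,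
      neg_zero]
  exact (hJ R hR).ne' hzero

theorem edgeData_bijective (hn : 1 ≤ n) : Bijective (edgeData J n) := by
  refine ⟨(injective_iff_map_eq_zero _).mpr fun P hP => ?_, fun st => ?_⟩
  · rw [edgeData_apply, Prod.mk_eq_zero] at hP
    exact Subtype.ext (eq_zero_of_mem_edgeSpace hJ P.2 hP.1 hP.2)
  -- Adding the `n - 1` orthogonality conditions to the data gives a square system.
  let Φ := ((edgeOrthMap J n).prod ((leval 1).prod J)) ∘ₗ (degreeLT ℝ (n + 1)).subtype
  have hΦ : Injective Φ := by
    refine (injective_iff_map_eq_zero _).mpr fun P hP => ?_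
    simp only [Φ, LinearMap.comp_apply, LinearMap.prod_apply, Function.prod, Prod.mk_eq_zero] at hP
    exact Subtype.ext (eq_zero_of_mem_edgeSpace hJ ⟨P.2, hP.1⟩ hP.2.1 hP.2.2)
  have hrank : Module.finrank ℝ (degreeLT ℝ (n + 1)) =
      Module.finrank ℝ ((Fin (n - 1) → ℝ) × ℝ × ℝ) := by
    rw [Module.finrank_eq_card_basis (degreeLT.basis ℝ (n + 1))]
    simp only [Fintype.card_fin, Module.finrank_prod, Module.finrank_fin_fun, Module.finrank_self]
    omega
  obtain ⟨P, hP⟩ := (LinearMap.injective_iff_surjective_of_finrank_eq_finrank hrank).mp hΦ (0, st)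
  simp only [Φ, LinearMap.comp_apply, LinearMap.prod_apply, Function.prod, Prod.mk.injEq] at hP
  exact ⟨⟨P, P.2, hP.1⟩, hP.2⟩

end EdgeSpace

section Moment

variable {w : ℝ → ℝ} (hi : IntervalIntegrable w volume 0 1)
include hi

theorem intervalIntegrable_eval_mul (F : ℝ[X]) :
    IntervalIntegrable (fun x => F.eval x * w x) volume 0 1 :=
  hi.continuousOn_mul F.continuous.continuousOn

def momentFunctional : ℝ[X] →ₗ[ℝ] ℝ where
  toFun F := ∫ x in (0 : ℝ)..1, F.eval x * w x
  map_add' F G := by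
    simpa only [eval_add, add_mul] using
      intervalIntegral.integral_add (intervalIntegrable_eval_mul hi F)
        (intervalIntegrable_eval_mul hi G)
  map_smul' c F := by
    simpa only [eval_smul, smul_eq_mul, mul_assoc, RingHom.id_apply] using
      intervalIntegral.integral_const_mul c _

theorem momentFunctional_apply (F : ℝ[X]) :
    momentFunctional hi F = ∫ x in (0 : ℝ)..1, F.eval x * w x := rfl

variable (hw : ∀ x ∈ Set.Icc (0 : ℝ) 1, 0 ≤ w x) (hp : 0 < ∫ x in (0 : ℝ)..1, w x)
include hw hp

theorem momentFunctional_pos {F : ℝ[X]} (hF0 : F ≠ 0) (hF : ∀ x ∈ Set.Icc (0 : ℝ) 1, 0 ≤ F.eval x) :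
    0 < momentFunctional hi F := by
  have nonneg_ae {f : ℝ → ℝ} (hf : ∀ x ∈ Set.Icc (0 : ℝ) 1, 0 ≤ f x) :
      0 ≤ᵐ[volume.restrict (Set.uIoc 0 1)] f := by
    rw [Set.uIoc_of_le zero_le_one]
    exact ae_restrict_of_forall_mem measurableSet_Ioc fun x hx => hf x (Set.Ioc_subset_Icc_self hx)
  have hwpos := ((intervalIntegral.integral_pos_iff_support_of_nonneg_ae' (nonneg_ae hw) hi).1 hp).2
  refine (intervalIntegral.integral_pos_iff_support_of_nonneg_ae'
    (nonneg_ae fun x hx => mul_nonneg (hF x hx) (hw x hx)) (intervalIntegrable_eval_mul hi F)).2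
    ⟨zero_lt_one, ?_⟩
  -- Off the finitely many roots of `F`, the support of `F * w` is that of `w`.
  calc 0 < volume (Function.support w ∩ Set.Ioc 0 1) := hwpos
    _ = volume ((Function.support w ∩ Set.Ioc 0 1) \ {x | F.IsRoot x}) :=
      (measure_sdiff_null ((finite_setOfPred_isRoot hF0).measure_zero _)).symm
    _ ≤ volume (Function.support (fun x => F.eval x * w x) ∩ Set.Ioc 0 1) :=
      measure_mono fun x ⟨⟨hwx, hx⟩, hFx⟩ => ⟨mul_ne_zero hFx hwx, hx⟩

theorem momentFunctional_one_sub_X_mul_sq_pos {R : ℝ[X]} (hR : R ≠ 0) :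
    0 < momentFunctional hi ((1 - X) * R ^ 2) := by
  have h1X : (1 - X : ℝ[X]) ≠ 0 := fun h => by simpa using congrArg (eval 0) h
  refine momentFunctional_pos hi hw hp (mul_ne_zero h1X (pow_ne_zero 2 hR)) fun x hx => ?_
  simpa using mul_nonneg (sub_nonneg.2 hx.2) (sq_nonneg (R.eval x))

end Moment

end Polynomial

open scoped Polynomial

theorem MvPolynomial.natDegree_aeval_le_totalDegree {R σ : Type*} [CommSemiring R] (v : σ → R[X])
    (hv : ∀ i, (v i).natDegree ≤ 1) (p : MvPolynomial σ R) :
    (aeval v p).natDegree ≤ p.totalDegree := by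
  conv_lhs => rw [p.as_sum, map_sum]
  refine Polynomial.natDegree_sum_le_of_forall_le _ _ fun s hs => ?_
  rw [aeval_monomial, ← Polynomial.C_eq_algebraMap]
  refine (Polynomial.natDegree_C_mul_le _ _).trans ((Polynomial.natDegree_prod_le _ _).trans ?_)
  refine (Finset.sum_le_sum fun i _ => Polynomial.natDegree_pow_le_of_le (s i) (hv i)).trans ?_
  simpa [Finsupp.sum] using le_totalDegree hs

theorem Polynomial.totalDegree_toMvPolynomial_le {R σ : Type*} [CommSemiring R] (i : σ)
    (F : R[X]) : (F.toMvPolynomial i).totalDegree ≤ F.natDegree := by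
  conv_lhs => rw [F.as_sum_range_C_mul_X_pow]
  rw [map_sum]
  refine totalDegree_finsetSum_le fun k hk => ?_
  rw [map_mul, map_pow, toMvPolynomial_C, toMvPolynomial_X, MvPolynomial.C_mul_X_pow_eq_monomial]
  refine (totalDegree_monomial_le _ _).trans ?_
  simpa using Nat.lt_succ_iff.mp (Finset.mem_range.mp hk)

/-- `edgeRes 0 p = p(t, 1)` and `edgeRes 1 p = p(1, t)`. -/
def edgeRes (i : Fin 2) : R2 →ₐ[ℝ] ℝ[X] := aeval (Function.update 1 i Polynomial.X)

theorem edgeRes_X_self (i : Fin 2) : edgeRes i (X i) = Polynomial.X := by simp [edgeRes]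

theorem edgeRes_X_of_ne {i j : Fin 2} (h : j ≠ i) : edgeRes i (X j) = 1 := by simp [edgeRes, h]

theorem eval_edgeRes (i : Fin 2) (p : R2) (x : ℝ) :
    (edgeRes i p).eval x = eval (Function.update 1 i x) p := by
  have h : (Polynomial.aeval x).comp (edgeRes i) = aeval (Function.update 1 i x) :=
    algHom_ext fun j => by
      rcases eq_or_ne j i with rfl | h <;> simp [edgeRes_X_self, edgeRes_X_of_ne, *]
  simpa using DFunLike.congr_fun h p

theorem eval_one_edgeRes (i : Fin 2) (p : R2) : (edgeRes i p).eval 1 = eval 1 p := by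
  simp [eval_edgeRes]

theorem natDegree_edgeRes_le (i : Fin 2) (p : R2) : (edgeRes i p).natDegree ≤ p.totalDegree :=
  natDegree_aeval_le_totalDegree _ (fun j => by rcases eq_or_ne j i with rfl | h <;> simp [*]) p

theorem edgeRes_toMvPolynomial_self (i : Fin 2) (F : ℝ[X]) :
    edgeRes i (F.toMvPolynomial i) = F := by
  simp [edgeRes]

theorem edgeRes_toMvPolynomial_of_ne {i j : Fin 2} (h : j ≠ i) (F : ℝ[X]) :
    edgeRes i (F.toMvPolynomial j) = Polynomial.C (F.eval 1) := by
  simp only [edgeRes, aeval_toMvPolynomial, Function.update_of_ne h, Pi.one_apply]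
  rw [← map_one (algebraMap ℝ ℝ[X]), Polynomial.aeval_algebraMap_apply_eq_algebraMap_eval]
  rfl

theorem X_sub_one_dvd_sub_toMvPolynomial_edgeRes {i j : Fin 2} (hij : i ≠ j) (p : R2) :
    X i - 1 ∣ p - (edgeRes j p).toMvPolynomial j := by
  rw [← Ideal.mem_span_singleton, ← Ideal.Quotient.eq, ← Ideal.Quotient.mkₐ_eq_mk ℝ]
  -- Modulo `X i - 1` the variable `X i` is `1`, which is what `edgeRes j` substitutes for it.
  have : Ideal.Quotient.mkₐ ℝ (Ideal.span {X i - 1}) =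
      (Ideal.Quotient.mkₐ ℝ _).comp ((Polynomial.toMvPolynomial j).comp (edgeRes j)) := by
    refine algHom_ext fun k => ?_
    rcases eq_or_ne k j with rfl | hkj
    · simp [edgeRes_X_self]
    · obtain rfl : k = i := by omega
      simpa [edgeRes_X_of_ne hkj] using
        Ideal.Quotient.eq.2 (Ideal.mem_span_singleton_self (X k - 1 : R2))
  exact DFunLike.congr_fun this p

theorem mem_wedgeIdeal_iff (p : R2) : p ∈ wedgeIdeal ↔ edgeRes 0 p = 0 ∧ edgeRes 1 p = 0 := by
  refine ⟨fun hp => ?_, fun ⟨h0, h1⟩ => ?_⟩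
  · obtain ⟨c, rfl⟩ := Ideal.mem_span_singleton.mp hp
    simp [edgeRes_X_self, edgeRes_X_of_ne]
  · obtain ⟨g, rfl⟩ : X 0 - 1 ∣ p := by
      simpa [h1] using X_sub_one_dvd_sub_toMvPolynomial_edgeRes (by decide : (0 : Fin 2) ≠ 1) p
    have hg : edgeRes 0 g = 0 := by
      rw [map_mul, map_sub, edgeRes_X_self, map_one] at h0
      exact (mul_eq_zero.mp h0).resolve_left (by simpa using Polynomial.X_sub_C_ne_zero (1 : ℝ))
    obtain ⟨h, rfl⟩ : X 1 - 1 ∣ g := by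
      simpa [hg] using X_sub_one_dvd_sub_toMvPolynomial_edgeRes (by decide : (1 : Fin 2) ≠ 0) g
    exact Ideal.mem_span_singleton.mpr ⟨h, by ring⟩

theorem wedgeIdeal.mk_eq_mk_iff (p q : R2) :
    Ideal.Quotient.mk wedgeIdeal p = Ideal.Quotient.mk wedgeIdeal q ↔
      edgeRes 0 p = edgeRes 0 q ∧ edgeRes 1 p = edgeRes 1 q := by
  simp only [Ideal.Quotient.eq, mem_wedgeIdeal_iff, map_sub, sub_eq_zero]

/-- `(P, Q) ↦ P(x) + Q(y) - P(1)`. -/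
def wedgeGlue : ℝ[X] × ℝ[X] →ₗ[ℝ] R2 :=
  (Polynomial.toMvPolynomial 0).toLinearMap ∘ₗ LinearMap.fst ℝ _ _ +
    (Polynomial.toMvPolynomial 1).toLinearMap ∘ₗ LinearMap.snd ℝ _ _ -
    Algebra.linearMap ℝ R2 ∘ₗ Polynomial.leval 1 ∘ₗ LinearMap.fst ℝ _ _

theorem wedgeGlue_apply (P Q : ℝ[X]) :
    wedgeGlue (P, Q) = P.toMvPolynomial 0 + Q.toMvPolynomial 1 - C (P.eval 1) := rfl

theorem edgeRes_wedgeGlue {P Q : ℝ[X]} (h : P.eval 1 = Q.eval 1) :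
    edgeRes 0 (wedgeGlue (P, Q)) = P ∧ edgeRes 1 (wedgeGlue (P, Q)) = Q := by
  simp [wedgeGlue_apply, edgeRes_toMvPolynomial_self, edgeRes_toMvPolynomial_of_ne, h]

theorem totalDegree_wedgeGlue_le {P Q : ℝ[X]} {n : ℕ} (hP : P.natDegree ≤ n)
    (hQ : Q.natDegree ≤ n) :
    (wedgeGlue (P, Q)).totalDegree ≤ n := by
  rw [wedgeGlue_apply]
  refine (totalDegree_sub _ _).trans (max_le ((totalDegree_add _ _).trans (max_le ?_ ?_)) ?_)
  · exact (Polynomial.totalDegree_toMvPolynomial_le _ _).trans hP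
  · exact (Polynomial.totalDegree_toMvPolynomial_le _ _).trans hQ
  · simp

theorem totalDegree_X_pow_sub_one_lt {n : ℕ} (j : Fin 2) (i : Fin (n - 1)) :
    (X j ^ ((i : ℕ) + 1) - 1 : R2).totalDegree < n := by
  have := i.isLt
  refine (totalDegree_sub _ _).trans_lt (max_lt ?_ ?_)
  · rw [totalDegree_X_pow]
    omega
  · rw [totalDegree_one]
    omega

section WedgeForm

open Polynomial (momentFunctional edgeOrthMap edgeSpace edgeData_apply edgeData_bijective
  mem_edgeSpace_iff map_mul_of_mem_ker)

variable {w1 w2 : ℝ → ℝ} (hi1 : IntervalIntegrable w1 volume 0 1)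
  (hi2 : IntervalIntegrable w2 volume 0 1)

local notation "J₁" => momentFunctional hi1
local notation "J₂" => momentFunctional hi2

theorem wedgeForm_eq_momentFunctional (f g : R2) :
    wedgeForm w1 w2 f g = J₁ (edgeRes 0 f * edgeRes 0 g) + J₂ (edgeRes 1 f * edgeRes 1 g) := by
  have h0 (x : ℝ) : ![x, 1] = Function.update (1 : Fin 2 → ℝ) 0 x := by ext j; fin_cases j <;> rfl
  have h1 (y : ℝ) : ![1, y] = Function.update (1 : Fin 2 → ℝ) 1 y := by ext j; fin_cases j <;> rfl
  simp only [wedgeForm, ev, Polynomial.momentFunctional_apply, Polynomial.eval_mul, eval_edgeRes,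
    h0, h1]

theorem forall_wedgeForm_eq_zero_iff {n : ℕ} (hn : 1 ≤ n) (p : R2) :
    (∀ r : R2, r.totalDegree < n → wedgeForm w1 w2 p r = 0) ↔
      edgeRes 0 p ∈ LinearMap.ker (edgeOrthMap J₁ n) ∧
        edgeRes 1 p ∈ LinearMap.ker (edgeOrthMap J₂ n) ∧
        J₁ (edgeRes 0 p) + J₂ (edgeRes 1 p) = 0 := by
  refine ⟨fun h => ⟨?_, ?_, ?_⟩, fun ⟨h0, h1, hsum⟩ r hr => ?_⟩
  · ext i
    have := h (X 0 ^ ((i : ℕ) + 1) - 1) (totalDegree_X_pow_sub_one_lt _ i)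
    simpa [wedgeForm_eq_momentFunctional hi1 hi2, edgeOrthMap, edgeRes_X_self, edgeRes_X_of_ne]
      using this
  · ext i
    have := h (X 1 ^ ((i : ℕ) + 1) - 1) (totalDegree_X_pow_sub_one_lt _ i)
    simpa [wedgeForm_eq_momentFunctional hi1 hi2, edgeOrthMap, edgeRes_X_self, edgeRes_X_of_ne]
      using this
  · simpa [wedgeForm_eq_momentFunctional hi1 hi2] using h 1 (by rwa [totalDegree_one])
  · rw [wedgeForm_eq_momentFunctional hi1 hi2,
      map_mul_of_mem_ker h0 ((natDegree_edgeRes_le 0 r).trans_lt hr),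
      map_mul_of_mem_ker h1 ((natDegree_edgeRes_le 1 r).trans_lt hr),
      eval_one_edgeRes, eval_one_edgeRes, ← mul_add, hsum, mul_zero]

theorem mem_wedgeOP_iff {n : ℕ} (hn : 1 ≤ n) {q : R2 ⧸ wedgeIdeal} :
    q ∈ wedgeOP w1 w2 n ↔ ∃ P ∈ edgeSpace J₁ n, ∃ Q ∈ edgeSpace J₂ n,
      P.eval 1 = Q.eval 1 ∧ J₁ P + J₂ Q = 0 ∧
        Ideal.Quotient.mk wedgeIdeal (wedgeGlue (P, Q)) = q := by
  constructor
  · rintro ⟨p, rfl, hdeg, horth⟩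
    obtain ⟨h0, h1, hsum⟩ := (forall_wedgeForm_eq_zero_iff hi1 hi2 hn p).mp horth
    have h11 : (edgeRes 0 p).eval 1 = (edgeRes 1 p).eval 1 := by
      rw [eval_one_edgeRes, eval_one_edgeRes]
    exact ⟨_, mem_edgeSpace_iff.mpr ⟨(natDegree_edgeRes_le 0 p).trans hdeg, h0⟩,
      _, mem_edgeSpace_iff.mpr ⟨(natDegree_edgeRes_le 1 p).trans hdeg, h1⟩, h11, hsum,
      (wedgeIdeal.mk_eq_mk_iff _ _).mpr (edgeRes_wedgeGlue h11)⟩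
  · rintro ⟨P, hP, Q, hQ, h11, hsum, rfl⟩
    rw [mem_edgeSpace_iff] at hP hQ
    obtain ⟨hres0, hres1⟩ := edgeRes_wedgeGlue h11
    refine ⟨_, rfl, totalDegree_wedgeGlue_le hP.1 hQ.1,
      (forall_wedgeForm_eq_zero_iff hi1 hi2 hn _).mpr ?_⟩
    rw [hres0, hres1]
    exact ⟨hP.2, hQ.2, hsum⟩

theorem exists_injective_range_eq_wedgeOP
    (hJ₁ : ∀ R : ℝ[X], R ≠ 0 → 0 < J₁ ((1 - Polynomial.X) * R ^ 2))
    (hJ₂ : ∀ R : ℝ[X], R ≠ 0 → 0 < J₂ ((1 - Polynomial.X) * R ^ 2)) {n : ℕ} (hn : 1 ≤ n) :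
    ∃ Ψ : ℝ × ℝ →ₗ[ℝ] R2 ⧸ wedgeIdeal, Injective Ψ ∧ Set.range Ψ = wedgeOP w1 w2 n := by
  let e₁ := LinearEquiv.ofBijective _ (edgeData_bijective hJ₁ hn)
  let e₂ := LinearEquiv.ofBijective _ (edgeData_bijective hJ₂ hn)
  -- `(a, b)` goes to the edge polynomials with data `(a, b)` and `(a, -b)`.
  let edges : ℝ × ℝ →ₗ[ℝ] ℝ[X] × ℝ[X] :=
    ((edgeSpace J₁ n).subtype ∘ₗ e₁.symm.toLinearMap).prod
      ((edgeSpace J₂ n).subtype ∘ₗ e₂.symm.toLinearMap ∘ₗ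
        (LinearMap.fst ℝ ℝ ℝ).prod (-LinearMap.snd ℝ ℝ ℝ))
  have hdata₁ (x : ℝ × ℝ) : (e₁.symm x : ℝ[X]).eval 1 = x.1 ∧ J₁ (e₁.symm x) = x.2 :=
    Prod.ext_iff.mp (e₁.apply_symm_apply x)
  have hdata₂ (x : ℝ × ℝ) : (e₂.symm x : ℝ[X]).eval 1 = x.1 ∧ J₂ (e₂.symm x) = x.2 :=
    Prod.ext_iff.mp (e₂.apply_symm_apply x)
  refine ⟨(Ideal.Quotient.mkₐ ℝ wedgeIdeal).toLinearMap ∘ₗ wedgeGlue ∘ₗ edges, ?_, ?_⟩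
  · refine (injective_iff_map_eq_zero _).mpr fun x hx => ?_
    have hx' : Ideal.Quotient.mk wedgeIdeal (wedgeGlue (edges x)) =
        Ideal.Quotient.mk wedgeIdeal 0 := hx.trans (map_zero _).symm
    have hP : (e₁.symm x : ℝ[X]) = 0 :=
      (edgeRes_wedgeGlue ((hdata₁ x).1.trans (hdata₂ (x.1, -x.2)).1.symm)).1.symm.trans
        (((wedgeIdeal.mk_eq_mk_iff _ _).mp hx').1.trans (map_zero _))
    simpa using e₁.symm.map_eq_zero_iff.mp (Subtype.ext hP)
  · ext q
    rw [mem_wedgeOP_iff hi1 hi2 hn]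
    constructor
    · rintro ⟨x, rfl⟩
      exact ⟨_, (e₁.symm x).2, _, (e₂.symm _).2, (hdata₁ x).1.trans (hdata₂ (x.1, -x.2)).1.symm,
        by rw [(hdata₁ x).2, (hdata₂ (x.1, -x.2)).2, add_neg_cancel], rfl⟩
    · rintro ⟨P, hP, Q, hQ, h11, hsum, rfl⟩
      have hQ' : e₂.symm ((e₁ ⟨P, hP⟩).1, -(e₁ ⟨P, hP⟩).2) = ⟨Q, hQ⟩ := by
        refine e₂.symm_apply_eq.mpr ?_
        simp only [e₁, e₂, LinearEquiv.ofBijective_apply, edgeData_apply, h11,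
          eq_neg_of_add_eq_zero_right hsum]
      refine ⟨e₁ ⟨P, hP⟩, ?_⟩
      change Ideal.Quotient.mk wedgeIdeal (wedgeGlue (e₁.symm (e₁ ⟨P, hP⟩),
        e₂.symm ((e₁ ⟨P, hP⟩).1, -(e₁ ⟨P, hP⟩).2))) = _
      rw [e₁.symm_apply_apply, hQ']

end WedgeForm

theorem LinearMap.linearIndependent_pair_and_range_eq {K M : Type*} [Ring K] [AddCommGroup M]
    [Module K M] (Ψ : K × K →ₗ[K] M) (hΨ : Injective Ψ) :
    LinearIndependent K ![Ψ (1, 0), Ψ (0, 1)] ∧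
      Set.range Ψ = {q | ∃ a b : K, q = a • Ψ (1, 0) + b • Ψ (0, 1)} := by
  have hΨ_apply (a b : K) : a • Ψ (1, 0) + b • Ψ (0, 1) = Ψ (a, b) := by
    rw [← map_smul, ← map_smul, ← map_add]
    simp
  refine ⟨LinearIndependent.pair_iff.mpr fun a b h => ?_, ?_⟩
  · rw [hΨ_apply, ← map_zero Ψ] at h
    simpa using hΨ h
  · ext q
    simp only [Set.mem_range, Set.mem_ofPred_eq, hΨ_apply, Prod.exists, eq_comm]

theorem wedgeIdeal.mk_one_ne_zero : Ideal.Quotient.mk wedgeIdeal 1 ≠ 0 := by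
  intro h
  have := ((wedgeIdeal.mk_eq_mk_iff 1 0).mp (by rw [h, map_zero])).1
  simp at this

theorem wedgeIdeal.mk_C (a : ℝ) :
    Ideal.Quotient.mk wedgeIdeal (C a) = a • Ideal.Quotient.mk wedgeIdeal 1 := by
  rw [← Ideal.Quotient.mkₐ_eq_mk ℝ, ← map_smul, smul_eq_C_mul, mul_one]

theorem wedgeOP_zero (w1 w2 : ℝ → ℝ) :
    wedgeOP w1 w2 0 = {q | ∃ a : ℝ, q = a • Ideal.Quotient.mk wedgeIdeal 1} := by
  ext q
  constructor
  · rintro ⟨p, rfl, hdeg, -⟩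
    rw [totalDegree_eq_zero_iff_eq_C.mp (Nat.le_zero.mp hdeg)]
    exact ⟨_, wedgeIdeal.mk_C _⟩
  · rintro ⟨a, rfl⟩
    exact ⟨C a, wedgeIdeal.mk_C a, (totalDegree_C a).le, fun _ hr => absurd hr (Nat.not_lt_zero _)⟩

/-- The space of orthogonal polynomials of degree `n` on the wedge has dimension `1` for
`n = 0` and dimension `2` for every `n ≥ 1`. -/
theorem wedge_orthogonal_dimension (w1 w2 : ℝ → ℝ)
    (hw1 : ∀ x ∈ Set.Icc (0:ℝ) 1, 0 ≤ w1 x) (hw2 : ∀ x ∈ Set.Icc (0:ℝ) 1, 0 ≤ w2 x)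
    (hi1 : IntervalIntegrable w1 volume 0 1) (hi2 : IntervalIntegrable w2 volume 0 1)
    (hp1 : 0 < ∫ x in (0:ℝ)..1, w1 x) (hp2 : 0 < ∫ x in (0:ℝ)..1, w2 x) :
    (∃ u : R2 ⧸ wedgeIdeal, u ≠ 0 ∧ wedgeOP w1 w2 0 = {q | ∃ a : ℝ, q = a • u}) ∧
    ∀ n : ℕ, 1 ≤ n → ∃ u v : R2 ⧸ wedgeIdeal,
      LinearIndependent ℝ ![u, v] ∧
      wedgeOP w1 w2 n = {q | ∃ a b : ℝ, q = a • u + b • v} := by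
  refine ⟨⟨_, wedgeIdeal.mk_one_ne_zero, wedgeOP_zero w1 w2⟩, fun n hn => ?_⟩
  obtain ⟨Ψ, hΨ, hrange⟩ := exists_injective_range_eq_wedgeOP hi1 hi2
    (fun _ => Polynomial.momentFunctional_one_sub_X_mul_sq_pos hi1 hw1 hp1)
    (fun _ => Polynomial.momentFunctional_one_sub_X_mul_sq_pos hi2 hw2 hp2) hn
  obtain ⟨hind, hΨrange⟩ := Ψ.linearIndependent_pair_and_range_eq hΨ
  exact ⟨_, _, hind, hrange ▸ hΨrange⟩

end
end

section
/- Let w be a weight on [0,1], φw(x) = (1-x)²w(x), and let pₙ(w) denote orthonormal-up-to-constant orthogonal polynomials for w with squared norms hₙ(w). Define Pₙ(x,y) = pₙ(w;x) + pₙ(w;y) − pₙ(w;1) and Qₙ(x,y) = (1-x)p_{n-1}(φw;x) − (1-y)p_{n-1}(φw;y). Then with respect to the wedge inner product ⟨f,g⟩_w = ∫₀¹ f(x,1)g(x,1)w(x)dx + ∫₀¹ f(1,y)g(1,y)w(y)dy, one has ⟨Pₙ,Q_m⟩_w = 0 for all n ≥ 0, m ≥ 1, ⟨Pₙ,P_m⟩_w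 = 2hₙ(w)δ_{nm}, and ⟨Qₙ,Q_m⟩_w = 2h_{n-1}(φw)δ_{nm}. -/
open MeasureTheory

noncomputable section

/-- Squared `L²(w)` norm of the `n`-th member of a family of functions on `[0,1]`. -/
def hnorm (w : ℝ → ℝ) (p : ℕ → ℝ → ℝ) (n : ℕ) : ℝ :=
  ∫ x in (0:ℝ)..1, (p n x) ^ 2 * w x

/-- The wedge inner product with equal weight `w` on both edges. -/
def wedgeInner (w : ℝ → ℝ) (f g : ℝ → ℝ → ℝ) : ℝ :=
  (∫ x in (0:ℝ)..1, f x 1 * g x 1 * w x) +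
  (∫ y in (0:ℝ)..1, f 1 y * g 1 y * w y)

/-- `Pₙ(x,y) = pₙ(w;x) + pₙ(w;y) − pₙ(w;1)`. -/
def Pw (p : ℕ → ℝ → ℝ) (n : ℕ) (x y : ℝ) : ℝ := p n x + p n y - p n 1

/-- `Qₙ(x,y) = (1-x)p_{n-1}(φw;x) − (1-y)p_{n-1}(φw;y)`. -/
def Qw (pφ : ℕ → ℝ → ℝ) (n : ℕ) (x y : ℝ) : ℝ :=
  (1 - x) * pφ (n - 1) x - (1 - y) * pφ (n - 1) y

/-- With `pₙ(w)` orthogonal polynomials for `w` and `p_{n}(φw)` orthogonal polynomials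
for `φw(x) = (1-x)²w(x)`, the wedge polynomials `Pₙ, Qₙ` form an orthogonal system:
`⟨Pₙ,Q_m⟩_w = 0`, `⟨Pₙ,P_m⟩_w = 2hₙ(w)δ_{nm}`, `⟨Qₙ,Q_m⟩_w = 2h_{n-1}(φw)δ_{nm}`. -/
theorem wedge_orthogonal_basis (w : ℝ → ℝ) (p pφ : ℕ → ℝ → ℝ)
    (horth : ∀ n m : ℕ, n ≠ m → ∫ x in (0:ℝ)..1, p n x * p m x * w x = 0)
    (horthφ : ∀ n m : ℕ, n ≠ m →
      ∫ x in (0:ℝ)..1, pφ n x * pφ m x * ((1 - x) ^ 2 * w x) = 0) :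
    (∀ n m : ℕ, 1 ≤ m → wedgeInner w (Pw p n) (Qw pφ m) = 0) ∧
    (∀ n m : ℕ, wedgeInner w (Pw p n) (Pw p m) =
      if n = m then 2 * hnorm w p n else 0) ∧
    (∀ n m : ℕ, 1 ≤ n → 1 ≤ m → wedgeInner w (Qw pφ n) (Qw pφ m) =
      if n = m then 2 * hnorm (fun x => (1 - x) ^ 2 * w x) pφ (n - 1) else 0) := by
  refine ⟨?_, ?_, ?_⟩
  · intro n m _
    simp only [wedgeInner, Pw, Qw]
    have h1 : ∀ x : ℝ, (p n x + p n 1 - p n 1) *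
        ((1 - x) * pφ (m - 1) x - (1 - (1:ℝ)) * pφ (m - 1) 1) * w x
        = p n x * ((1 - x) * pφ (m - 1) x) * w x := by intro x; ring
    have h2 : ∀ y : ℝ, (p n 1 + p n y - p n 1) *
        ((1 - (1:ℝ)) * pφ (m - 1) 1 - (1 - y) * pφ (m - 1) y) * w y
        = -(p n y * ((1 - y) * pφ (m - 1) y) * w y) := by intro y; ring
    rw [intervalIntegral.integral_congr (fun x _ => h1 x),
      intervalIntegral.integral_congr (fun y _ => h2 y),
      intervalIntegral.integral_neg]
    ring
  · intro n m
    simp only [wedgeInner, Pw]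
    have h1 : ∀ x : ℝ, (p n x + p n 1 - p n 1) * (p m x + p m 1 - p m 1) * w x
        = p n x * p m x * w x := by intro x; ring
    have h2 : ∀ y : ℝ, (p n 1 + p n y - p n 1) * (p m 1 + p m y - p m 1) * w y
        = p n y * p m y * w y := by intro y; ring
    rw [intervalIntegral.integral_congr (fun x _ => h1 x),
      intervalIntegral.integral_congr (fun y _ => h2 y)]
    by_cases hnm : n = m
    · subst hnm
      rw [if_pos rfl]; simp only [hnorm]
      have : ∀ x : ℝ, p n x * p n x * w x = p n x ^ 2 * w x := by intro x; ring
      rw [intervalIntegral.integral_congr (fun x _ => this x)]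
      ring
    · rw [if_neg hnm, horth n m hnm]; ring
  · intro n m hn hm
    simp only [wedgeInner, Qw]
    have h1 : ∀ x : ℝ, ((1 - x) * pφ (n - 1) x - (1 - (1:ℝ)) * pφ (n - 1) 1) *
        ((1 - x) * pφ (m - 1) x - (1 - (1:ℝ)) * pφ (m - 1) 1) * w x
        = pφ (n - 1) x * pφ (m - 1) x * ((1 - x) ^ 2 * w x) := by intro x; ring
    have h2 : ∀ y : ℝ, ((1 - (1:ℝ)) * pφ (n - 1) 1 - (1 - y) * pφ (n - 1) y) *
        ((1 - (1:ℝ)) * pφ (m - 1) 1 - (1 - y) * pφ (m - 1) y) * w y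
        = pφ (n - 1) y * pφ (m - 1) y * ((1 - y) ^ 2 * w y) := by intro y; ring
    rw [intervalIntegral.integral_congr (fun x _ => h1 x),
      intervalIntegral.integral_congr (fun y _ => h2 y)]
    by_cases hnm : n = m
    · subst hnm
      rw [if_pos rfl]; simp only [hnorm]
      have : ∀ x : ℝ, pφ (n - 1) x * pφ (n - 1) x * ((1 - x) ^ 2 * w x)
          = pφ (n - 1) x ^ 2 * ((1 - x) ^ 2 * w x) := by intro x; ring
      rw [intervalIntegral.integral_congr (fun x _ => this x)]
      ring
    · have : n - 1 ≠ m - 1 := fun h => hnm (by omega)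
      rw [if_neg hnm, horthφ _ _ this]; ring

end
end

section
/- Let Kₙ be the reproducing kernel for the wedge inner product ⟨·,·⟩_w built from the orthogonal basis {Pₖ, Qₖ}. Then for x, y ∈ [0,1]: Kₙ((x,1),(y,1)) = ½kₙ(w;x,y) + ½(1-x)(1-y)k_{n-1}(φw;x,y), and Kₙ((x,1),(1,y)) = ½kₙ(w;x,y) − ½(1-x)(1-y)k_{n-1}(φw;x,y), where kₙ(w;x,y) = Σ_{k=0}^n pₖ(w;x)pₖ(w;y)/hₖ(w) is the univariate Christoffel–Darboux kernel. -/
open MeasureTheory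

noncomputable section

/-- The univariate Christoffel–Darboux kernel `kₙ(w;x,y) = Σ_{k=0}^n pₖ(x)pₖ(y)/hₖ(w)`. -/
def cdKernel (w : ℝ → ℝ) (p : ℕ → ℝ → ℝ) (n : ℕ) (x y : ℝ) : ℝ :=
  ∑ k ∈ Finset.range (n + 1), p k x * p k y / hnorm w p k

/-- The wedge reproducing kernel
`Kₙ = 1/⟨1,1⟩_w + Σ_{k=1}^n [PₖPₖ/⟨Pₖ,Pₖ⟩ + QₖQₖ/⟨Qₖ,Qₖ⟩]`,
with `⟨Pₖ,Pₖ⟩_w = 2hₖ(w)` and `⟨Qₖ,Qₖ⟩_w = 2h_{k-1}(φw)`. -/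
def wedgeKernel (w : ℝ → ℝ) (p pφ : ℕ → ℝ → ℝ) (n : ℕ) (x1 x2 y1 y2 : ℝ) : ℝ :=
  1 / wedgeInner w (fun _ _ => 1) (fun _ _ => 1) +
  ∑ k ∈ Finset.Icc 1 n,
    (Pw p k x1 x2 * Pw p k y1 y2 / (2 * hnorm w p k) +
     Qw pφ k x1 x2 * Qw pφ k y1 y2 /
       (2 * hnorm (fun t => (1 - t) ^ 2 * w t) pφ (k - 1)))

lemma const_div_aux (c I : ℝ) (hc : c ≠ 0) :
    (1:ℝ) / (2 * I) = 1 / 2 * (c * c / (c ^ 2 * I)) := by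
  rcases eq_or_ne I 0 with h | h
  · simp [h]
  · field_simp

lemma sum_Icc_one_eq (f : ℕ → ℝ) (n : ℕ) :
    ∑ k ∈ Finset.Icc 1 n, f k = ∑ j ∈ Finset.range n, f (j + 1) := by
  rw [← Finset.Ico_add_one_right_eq_Icc, Finset.sum_Ico_eq_sum_range]
  simp [add_comm]

/-- The wedge reproducing kernel restricted to the wedge is expressed through the
univariate Christoffel–Darboux kernels of `w` and `φw(x) = (1-x)²w(x)`. -/
theorem wedge_kernel_formula (w : ℝ → ℝ) (p pφ : ℕ → ℝ → ℝ)
    (hp0 : ∀ x : ℝ, p 0 x = p 0 1) (hp0ne : p 0 1 ≠ 0)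
    (n : ℕ) (hn : 1 ≤ n) :
    ∀ x ∈ Set.Icc (0:ℝ) 1, ∀ y ∈ Set.Icc (0:ℝ) 1,
      (wedgeKernel w p pφ n x 1 y 1 =
        (1 / 2) * cdKernel w p n x y +
        (1 / 2) * (1 - x) * (1 - y) *
          cdKernel (fun t => (1 - t) ^ 2 * w t) pφ (n - 1) x y) ∧
      (wedgeKernel w p pφ n x 1 1 y =
        (1 / 2) * cdKernel w p n x y -
        (1 / 2) * (1 - x) * (1 - y) *
          cdKernel (fun t => (1 - t) ^ 2 * w t) pφ (n - 1) x y) := by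
  intro x hx y hy
  have hW : wedgeInner w (fun _ _ => 1) (fun _ _ => 1) = 2 * ∫ t in (0:ℝ)..1, w t := by
    unfold wedgeInner
    simp
    ring
  have hH : hnorm w p 0 = (p 0 1) ^ 2 * ∫ t in (0:ℝ)..1, w t := by
    unfold hnorm
    rw [show (∫ x in (0:ℝ)..1, (p 0 x) ^ 2 * w x) = ∫ x in (0:ℝ)..1, (p 0 1) ^ 2 * w x from by
      congr 1; funext t; rw [hp0 t]]
    exact intervalIntegral.integral_const_mul _ _
  have hconst : 1 / wedgeInner w (fun _ _ => 1) (fun _ _ => 1)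
      = 1 / 2 * (p 0 x * p 0 y / hnorm w p 0) := by
    rw [hW, hH, hp0 x, hp0 y]
    exact const_div_aux _ _ hp0ne
  have hcd : cdKernel w p n x y = p 0 x * p 0 y / hnorm w p 0
      + ∑ k ∈ Finset.Icc 1 n, p k x * p k y / hnorm w p k := by
    unfold cdKernel
    rw [Finset.sum_range_succ', sum_Icc_one_eq]
    ring
  have hcdφ : cdKernel (fun t => (1 - t) ^ 2 * w t) pφ (n - 1) x y
      = ∑ k ∈ Finset.Icc 1 n, pφ (k - 1) x * pφ (k - 1) y /
          hnorm (fun t => (1 - t) ^ 2 * w t) pφ (k - 1) := by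
    unfold cdKernel
    rw [sum_Icc_one_eq, Nat.sub_add_cancel hn]
    simp
  constructor
  · unfold wedgeKernel Pw Qw
    rw [hconst, hcd, hcdφ, mul_add, Finset.mul_sum, Finset.mul_sum,
      add_assoc, ← Finset.sum_add_distrib]
    congr 1
    apply Finset.sum_congr rfl
    intro k _
    simp only [sub_self, zero_mul, mul_zero, sub_zero, mul_one]
    ring
  · unfold wedgeKernel Pw Qw
    rw [hconst, hcd, hcdφ, mul_add, Finset.mul_sum, Finset.mul_sum,
      add_sub_assoc, ← Finset.sum_sub_distrib]
    congr 1
    apply Finset.sum_congr rfl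
    intro k _
    simp only [sub_self, zero_mul, mul_zero, sub_zero, mul_one, zero_sub]
    ring

end
end

section
/- For a function f on the wedge Ω, define f_e(x) = ½(f(x,1) + f(1,x)) and f_o(x) = ½(f(x,1) − f(1,x))/(1-x). Then the n-th partial sum of the Fourier expansion in the wedge orthogonal basis satisfies Sₙf(x,1) = sₙ(w; f_e, x) + (1-x)s_{n-1}(φw; f_o, x) and Sₙf(1,x) = sₙ(w; f_e, x) − (1-x)s_{n-1}(φw; f_o, x), where sₙ(w; g) denotes the n-th partial sum of the univariate Fourier orthogonal expansion of g with respect to w. -/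
open MeasureTheory

noncomputable section

/-- The `n`-th partial sum of the wedge Fourier orthogonal expansion, written via the
reproducing kernel: `Sₙf(x₁,x₂) = ⟨f, Kₙ((x₁,x₂),·)⟩_w`. -/
def wedgePartialSum (w : ℝ → ℝ) (p pφ : ℕ → ℝ → ℝ) (n : ℕ) (f : ℝ → ℝ → ℝ)
    (x1 x2 : ℝ) : ℝ :=
  (∫ y in (0:ℝ)..1, f y 1 * wedgeKernel w p pφ n x1 x2 y 1 * w y) +
  (∫ y in (0:ℝ)..1, f 1 y * wedgeKernel w p pφ n x1 x2 1 y * w y)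

/-- The `n`-th partial sum of the univariate Fourier orthogonal expansion,
`sₙ(w;g,x) = ∫₀¹ g(y)kₙ(w;x,y)w(y)dy`. -/
def uniPartialSum (w : ℝ → ℝ) (p : ℕ → ℝ → ℝ) (n : ℕ) (g : ℝ → ℝ) (x : ℝ) : ℝ :=
  ∫ y in (0:ℝ)..1, g y * cdKernel w p n x y * w y

/-- canonical kernel form -/
def KAN (w : ℝ → ℝ) (p pφ : ℕ → ℝ → ℝ) (n : ℕ) (x y ε : ℝ) : ℝ :=
  (∑ k ∈ Finset.range (n+1), p k x * p k y / (2 * hnorm w p k)) +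
    ε * ∑ k ∈ Finset.range n,
      ((1-x) * pφ k x) * ((1-y) * pφ k y) / (2 * hnorm (fun t => (1 - t) ^ 2 * w t) pφ k)

lemma h0_eq (w : ℝ → ℝ) (p : ℕ → ℝ → ℝ) (hp0 : ∀ x : ℝ, p 0 x = p 0 1) :
    hnorm w p 0 = p 0 1 ^ 2 * ∫ x in (0:ℝ)..1, w x := by
  unfold hnorm
  rw [show (fun x => p 0 x ^ 2 * w x) = fun x => p 0 1 ^ 2 * w x from
    funext fun x => by rw [hp0 x], intervalIntegral.integral_const_mul]

lemma coeff0 (w : ℝ → ℝ) (p : ℕ → ℝ → ℝ) (hp0 : ∀ x : ℝ, p 0 x = p 0 1)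
    (hp0ne : p 0 1 ≠ 0) (x y : ℝ) :
    1 / wedgeInner w (fun _ _ => 1) (fun _ _ => 1) = p 0 x * p 0 y / (2 * hnorm w p 0) := by
  rw [hp0 x, hp0 y, h0_eq w p hp0]
  have hW : wedgeInner w (fun _ _ => 1) (fun _ _ => 1) = 2 * ∫ t in (0:ℝ)..1, w t := by
    simp only [wedgeInner, one_mul]; ring
  rw [hW]
  rcases eq_or_ne (∫ t in (0:ℝ)..1, w t) 0 with h | h
  · rw [h]; simp
  · field_simp

lemma ker_sum_eq (w : ℝ → ℝ) (p pφ : ℕ → ℝ → ℝ) (hp0 : ∀ x : ℝ, p 0 x = p 0 1)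
    (hp0ne : p 0 1 ≠ 0) (n : ℕ) (x y σ τ : ℝ) :
    1 / wedgeInner w (fun _ _ => 1) (fun _ _ => 1) +
      ∑ k ∈ Finset.Icc 1 n, (p k x * p k y / (2 * hnorm w p k) +
        (σ * ((1-x) * pφ (k-1) x)) * (τ * ((1-y) * pφ (k-1) y)) /
          (2 * hnorm (fun t => (1 - t) ^ 2 * w t) pφ (k-1)))
    = KAN w p pφ n x y (σ * τ) := by
  unfold KAN
  rw [Finset.sum_add_distrib]
  have e1 : ∑ k ∈ Finset.Icc 1 n, p k x * p k y / (2 * hnorm w p k)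
      = ∑ k ∈ Finset.range n, p (k+1) x * p (k+1) y / (2 * hnorm w p (k+1)) := by
    rw [← Finset.Ico_add_one_right_eq_Icc, Finset.sum_Ico_eq_sum_range]
    exact Finset.sum_congr rfl fun k _ => by rw [Nat.add_comm]
  have e2 : ∑ k ∈ Finset.Icc 1 n,
        (σ * ((1-x) * pφ (k-1) x)) * (τ * ((1-y) * pφ (k-1) y)) /
          (2 * hnorm (fun t => (1 - t) ^ 2 * w t) pφ (k-1))
      = σ * τ * ∑ k ∈ Finset.range n,
          ((1-x) * pφ k x) * ((1-y) * pφ k y) /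
            (2 * hnorm (fun t => (1 - t) ^ 2 * w t) pφ k) := by
    rw [← Finset.Ico_add_one_right_eq_Icc, Finset.sum_Ico_eq_sum_range, Finset.mul_sum]
    exact Finset.sum_congr rfl fun k _ => by
      have hk : 1 + k - 1 = k := by omega
      rw [hk]; ring
  rw [e1, e2, Finset.sum_range_succ' (fun k => p k x * p k y / (2 * hnorm w p k)) n,
    coeff0 w p hp0 hp0ne x y]
  ring

lemma sum_int (m : ℕ) (u : ℕ → ℝ → ℝ) (c : ℕ → ℝ)
    (hu : ∀ k, IntervalIntegrable (u k) volume 0 1) :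
    (∫ y in (0:ℝ)..1, ∑ k ∈ Finset.range m, c k * u k y)
      = ∑ k ∈ Finset.range m, c k * ∫ y in (0:ℝ)..1, u k y := by
  rw [intervalIntegral.integral_finset_sum (fun k _ => (hu k).const_mul (c k))]
  exact Finset.sum_congr rfl fun k _ => intervalIntegral.integral_const_mul _ _

set_option maxHeartbeats 1000000 in
lemma edge_int (w : ℝ → ℝ) (p pφ : ℕ → ℝ → ℝ) (n : ℕ) (g : ℝ → ℝ)
    (hg1 : ∀ k, IntervalIntegrable (fun y => g y * p k y * w y) volume 0 1)
    (hg2 : ∀ k, IntervalIntegrable (fun y => g y * ((1 - y) * pφ k y) * w y) volume 0 1)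
    (x ε : ℝ) :
    (∫ y in (0:ℝ)..1, g y * KAN w p pφ n x y ε * w y)
    = (∑ k ∈ Finset.range (n+1), p k x / (2 * hnorm w p k) *
        ∫ y in (0:ℝ)..1, g y * p k y * w y)
      + ε * (1-x) * ∑ k ∈ Finset.range n,
          pφ k x / (2 * hnorm (fun t => (1 - t) ^ 2 * w t) pφ k) *
            ∫ y in (0:ℝ)..1, g y * ((1 - y) * pφ k y) * w y := by
  have hfun : (fun y => g y * KAN w p pφ n x y ε * w y) =
      fun y => (∑ k ∈ Finset.range (n+1),
          (p k x / (2 * hnorm w p k)) * (g y * p k y * w y))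
        + ∑ k ∈ Finset.range n,
            (ε * (1-x) * (pφ k x / (2 * hnorm (fun t => (1 - t) ^ 2 * w t) pφ k))) *
              (g y * ((1 - y) * pφ k y) * w y) := by
    funext y
    unfold KAN
    rw [mul_add, add_mul, Finset.mul_sum, Finset.sum_mul, Finset.mul_sum, Finset.mul_sum,
      Finset.sum_mul]
    congr 1
    · exact Finset.sum_congr rfl fun k _ => by ring
    · exact Finset.sum_congr rfl fun k _ => by ring
  have i1 : IntervalIntegrable (fun y => ∑ k ∈ Finset.range (n+1),
      (p k x / (2 * hnorm w p k)) * (g y * p k y * w y)) volume 0 1 :=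
    by
    have h := IntervalIntegrable.sum (μ := volume) (a := (0:ℝ)) (b := 1) (Finset.range (n+1))
      (f := fun k y => (p k x / (2 * hnorm w p k)) * (g y * p k y * w y))
      (fun k _ => (hg1 k).const_mul (p k x / (2 * hnorm w p k)))
    have heq : (∑ k ∈ Finset.range (n+1), fun y =>
        (p k x / (2 * hnorm w p k)) * (g y * p k y * w y))
        = (fun y => ∑ k ∈ Finset.range (n+1),
            (p k x / (2 * hnorm w p k)) * (g y * p k y * w y)) := by
      funext y; simp
    rwa [heq] at h
  have i2 : IntervalIntegrable (fun y => ∑ k ∈ Finset.range n,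
      (ε * (1-x) * (pφ k x / (2 * hnorm (fun t => (1 - t) ^ 2 * w t) pφ k))) *
        (g y * ((1 - y) * pφ k y) * w y)) volume 0 1 :=
    by
    have h := IntervalIntegrable.sum (μ := volume) (a := (0:ℝ)) (b := 1) (Finset.range n)
      (f := fun k y =>
        (ε * (1-x) * (pφ k x / (2 * hnorm (fun t => (1 - t) ^ 2 * w t) pφ k))) *
          (g y * ((1 - y) * pφ k y) * w y))
      (fun k _ => (hg2 k).const_mul
        (ε * (1-x) * (pφ k x / (2 * hnorm (fun t => (1 - t) ^ 2 * w t) pφ k))))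
    have heq : (∑ k ∈ Finset.range n, fun y =>
        (ε * (1-x) * (pφ k x / (2 * hnorm (fun t => (1 - t) ^ 2 * w t) pφ k))) *
          (g y * ((1 - y) * pφ k y) * w y))
        = (fun y => ∑ k ∈ Finset.range n,
            (ε * (1-x) * (pφ k x / (2 * hnorm (fun t => (1 - t) ^ 2 * w t) pφ k))) *
              (g y * ((1 - y) * pφ k y) * w y)) := by
      funext y; simp
    rwa [heq] at h
  rw [hfun, intervalIntegral.integral_add i1 i2,
    sum_int _ _ _ hg1, sum_int _ _ _ hg2, Finset.mul_sum]
  congr 1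
  exact Finset.sum_congr rfl fun k _ => by ring

lemma uni_e (w : ℝ → ℝ) (p : ℕ → ℝ → ℝ) (f : ℝ → ℝ → ℝ)
    (hif1 : ∀ k : ℕ, IntervalIntegrable (fun y => f y 1 * p k y * w y) volume 0 1)
    (hif2 : ∀ k : ℕ, IntervalIntegrable (fun y => f 1 y * p k y * w y) volume 0 1)
    (n : ℕ) (x : ℝ) :
    uniPartialSum w p n (fun t => (f t 1 + f 1 t) / 2) x
    = (∑ k ∈ Finset.range (n+1), p k x / (2 * hnorm w p k) *
        ∫ y in (0:ℝ)..1, f y 1 * p k y * w y)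
      + (∑ k ∈ Finset.range (n+1), p k x / (2 * hnorm w p k) *
          ∫ y in (0:ℝ)..1, f 1 y * p k y * w y) := by
  unfold uniPartialSum cdKernel
  have hfun : (fun y => (f y 1 + f 1 y) / 2 *
      (∑ k ∈ Finset.range (n + 1), p k x * p k y / hnorm w p k) * w y)
      = fun y => ∑ k ∈ Finset.range (n + 1),
          ((p k x / (2 * hnorm w p k)) * (f y 1 * p k y * w y)
            + (p k x / (2 * hnorm w p k)) * (f 1 y * p k y * w y)) := by
    funext y
    rw [Finset.mul_sum, Finset.sum_mul]
    exact Finset.sum_congr rfl fun k _ => by ring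
  rw [hfun, intervalIntegral.integral_finset_sum (fun k _ =>
    ((hif1 k).const_mul (p k x / (2 * hnorm w p k))).add
      ((hif2 k).const_mul (p k x / (2 * hnorm w p k)))), ← Finset.sum_add_distrib]
  refine Finset.sum_congr rfl fun k _ => ?_
  rw [intervalIntegral.integral_add ((hif1 k).const_mul (p k x / (2 * hnorm w p k)))
    ((hif2 k).const_mul (p k x / (2 * hnorm w p k))),
    intervalIntegral.integral_const_mul, intervalIntegral.integral_const_mul]

lemma uni_o (w : ℝ → ℝ) (pφ : ℕ → ℝ → ℝ) (f : ℝ → ℝ → ℝ)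
    (hig1 : ∀ k : ℕ,
      IntervalIntegrable (fun y => f y 1 * ((1 - y) * pφ k y) * w y) volume 0 1)
    (hig2 : ∀ k : ℕ,
      IntervalIntegrable (fun y => f 1 y * ((1 - y) * pφ k y) * w y) volume 0 1)
    (m : ℕ) (x : ℝ) :
    uniPartialSum (fun t => (1 - t) ^ 2 * w t) pφ m
      (fun t => (f t 1 - f 1 t) / (2 * (1 - t))) x
    = (∑ k ∈ Finset.range (m+1),
        pφ k x / (2 * hnorm (fun t => (1 - t) ^ 2 * w t) pφ k) *
          ∫ y in (0:ℝ)..1, f y 1 * ((1 - y) * pφ k y) * w y)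
      - (∑ k ∈ Finset.range (m+1),
          pφ k x / (2 * hnorm (fun t => (1 - t) ^ 2 * w t) pφ k) *
            ∫ y in (0:ℝ)..1, f 1 y * ((1 - y) * pφ k y) * w y) := by
  unfold uniPartialSum cdKernel
  have hfun : (fun y => (f y 1 - f 1 y) / (2 * (1 - y)) *
      (∑ k ∈ Finset.range (m + 1),
        pφ k x * pφ k y / hnorm (fun t => (1 - t) ^ 2 * w t) pφ k) * ((1 - y) ^ 2 * w y))
      = fun y => ∑ k ∈ Finset.range (m + 1),
          ((pφ k x / (2 * hnorm (fun t => (1 - t) ^ 2 * w t) pφ k)) *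
              (f y 1 * ((1 - y) * pφ k y) * w y)
            - (pφ k x / (2 * hnorm (fun t => (1 - t) ^ 2 * w t) pφ k)) *
                (f 1 y * ((1 - y) * pφ k y) * w y)) := by
    funext y
    rw [Finset.mul_sum, Finset.sum_mul]
    refine Finset.sum_congr rfl fun k _ => ?_
    rcases eq_or_ne y 1 with hy | hy
    · subst hy; simp
    · have h1y : (1:ℝ) - y ≠ 0 := sub_ne_zero.mpr fun h => hy h.symm
      rcases eq_or_ne (hnorm (fun t => (1 - t) ^ 2 * w t) pφ k) 0 with hd | hd
      · rw [hd]; simp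
      · field_simp
  rw [hfun, intervalIntegral.integral_finset_sum (fun k _ =>
    ((hig1 k).const_mul (pφ k x / (2 * hnorm (fun t => (1 - t) ^ 2 * w t) pφ k))).sub
      ((hig2 k).const_mul (pφ k x / (2 * hnorm (fun t => (1 - t) ^ 2 * w t) pφ k)))),
    ← Finset.sum_sub_distrib]
  refine Finset.sum_congr rfl fun k _ => ?_
  rw [intervalIntegral.integral_sub
    ((hig1 k).const_mul (pφ k x / (2 * hnorm (fun t => (1 - t) ^ 2 * w t) pφ k)))
    ((hig2 k).const_mul (pφ k x / (2 * hnorm (fun t => (1 - t) ^ 2 * w t) pφ k))),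
    intervalIntegral.integral_const_mul, intervalIntegral.integral_const_mul]

lemma ker_eval (w : ℝ → ℝ) (p pφ : ℕ → ℝ → ℝ) (hp0 : ∀ x : ℝ, p 0 x = p 0 1)
    (hp0ne : p 0 1 ≠ 0) (n : ℕ) (x y : ℝ) :
    wedgeKernel w p pφ n x 1 y 1 = KAN w p pφ n x y 1 ∧
    wedgeKernel w p pφ n x 1 1 y = KAN w p pφ n x y (-1) ∧
    wedgeKernel w p pφ n 1 x y 1 = KAN w p pφ n x y (-1) ∧
    wedgeKernel w p pφ n 1 x 1 y = KAN w p pφ n x y 1 := by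
  refine ⟨?_, ?_, ?_, ?_⟩ <;> unfold wedgeKernel
  · rw [show (∑ k ∈ Finset.Icc 1 n,
        (Pw p k x 1 * Pw p k y 1 / (2 * hnorm w p k) +
         Qw pφ k x 1 * Qw pφ k y 1 /
           (2 * hnorm (fun t => (1 - t) ^ 2 * w t) pφ (k - 1)))) =
      ∑ k ∈ Finset.Icc 1 n, (p k x * p k y / (2 * hnorm w p k) +
        ((1:ℝ) * ((1-x) * pφ (k-1) x)) * ((1:ℝ) * ((1-y) * pφ (k-1) y)) /
          (2 * hnorm (fun t => (1 - t) ^ 2 * w t) pφ (k-1))) from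
      Finset.sum_congr rfl fun k _ => by simp only [Pw, Qw]; ring,
      ker_sum_eq w p pφ hp0 hp0ne n x y 1 1]
    norm_num
  · rw [show (∑ k ∈ Finset.Icc 1 n,
        (Pw p k x 1 * Pw p k 1 y / (2 * hnorm w p k) +
         Qw pφ k x 1 * Qw pφ k 1 y /
           (2 * hnorm (fun t => (1 - t) ^ 2 * w t) pφ (k - 1)))) =
      ∑ k ∈ Finset.Icc 1 n, (p k x * p k y / (2 * hnorm w p k) +
        ((1:ℝ) * ((1-x) * pφ (k-1) x)) * (((-1):ℝ) * ((1-y) * pφ (k-1) y)) /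
          (2 * hnorm (fun t => (1 - t) ^ 2 * w t) pφ (k-1))) from
      Finset.sum_congr rfl fun k _ => by simp only [Pw, Qw]; ring,
      ker_sum_eq w p pφ hp0 hp0ne n x y 1 (-1)]
    norm_num
  · rw [show (∑ k ∈ Finset.Icc 1 n,
        (Pw p k 1 x * Pw p k y 1 / (2 * hnorm w p k) +
         Qw pφ k 1 x * Qw pφ k y 1 /
           (2 * hnorm (fun t => (1 - t) ^ 2 * w t) pφ (k - 1)))) =
      ∑ k ∈ Finset.Icc 1 n, (p k x * p k y / (2 * hnorm w p k) +
        (((-1):ℝ) * ((1-x) * pφ (k-1) x)) * (((1):ℝ) * ((1-y) * pφ (k-1) y)) /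
          (2 * hnorm (fun t => (1 - t) ^ 2 * w t) pφ (k-1))) from
      Finset.sum_congr rfl fun k _ => by simp only [Pw, Qw]; ring,
      ker_sum_eq w p pφ hp0 hp0ne n x y (-1) 1]
    norm_num
  · rw [show (∑ k ∈ Finset.Icc 1 n,
        (Pw p k 1 x * Pw p k 1 y / (2 * hnorm w p k) +
         Qw pφ k 1 x * Qw pφ k 1 y /
           (2 * hnorm (fun t => (1 - t) ^ 2 * w t) pφ (k - 1)))) =
      ∑ k ∈ Finset.Icc 1 n, (p k x * p k y / (2 * hnorm w p k) +
        (((-1):ℝ) * ((1-x) * pφ (k-1) x)) * (((-1):ℝ) * ((1-y) * pφ (k-1) y)) /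
          (2 * hnorm (fun t => (1 - t) ^ 2 * w t) pφ (k-1))) from
      Finset.sum_congr rfl fun k _ => by simp only [Pw, Qw]; ring,
      ker_sum_eq w p pφ hp0 hp0ne n x y (-1) (-1)]
    norm_num


/-- `Sₙf(x,1) = sₙ(w;f_e,x) + (1-x)s_{n-1}(φw;f_o,x)` and
`Sₙf(1,x) = sₙ(w;f_e,x) − (1-x)s_{n-1}(φw;f_o,x)`, where
`f_e(x) = ½(f(x,1)+f(1,x))` and `f_o(x) = ½(f(x,1)−f(1,x))/(1-x)`. -/
theorem wedge_partial_sum_decomposition (w : ℝ → ℝ) (p pφ : ℕ → ℝ → ℝ)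
    (f : ℝ → ℝ → ℝ)
    (hp0 : ∀ x : ℝ, p 0 x = p 0 1) (hp0ne : p 0 1 ≠ 0)
    (hif1 : ∀ k : ℕ, IntervalIntegrable (fun y => f y 1 * p k y * w y) volume 0 1)
    (hif2 : ∀ k : ℕ, IntervalIntegrable (fun y => f 1 y * p k y * w y) volume 0 1)
    (hig1 : ∀ k : ℕ,
      IntervalIntegrable (fun y => f y 1 * ((1 - y) * pφ k y) * w y) volume 0 1)
    (hig2 : ∀ k : ℕ,
      IntervalIntegrable (fun y => f 1 y * ((1 - y) * pφ k y) * w y) volume 0 1)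
    (n : ℕ) (hn : 1 ≤ n) :
    ∀ x : ℝ,
      (wedgePartialSum w p pφ n f x 1 =
        uniPartialSum w p n (fun t => (f t 1 + f 1 t) / 2) x +
        (1 - x) * uniPartialSum (fun t => (1 - t) ^ 2 * w t) pφ (n - 1)
          (fun t => (f t 1 - f 1 t) / (2 * (1 - t))) x) ∧
      (wedgePartialSum w p pφ n f 1 x =
        uniPartialSum w p n (fun t => (f t 1 + f 1 t) / 2) x -
        (1 - x) * uniPartialSum (fun t => (1 - t) ^ 2 * w t) pφ (n - 1)
          (fun t => (f t 1 - f 1 t) / (2 * (1 - t))) x) := by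
  intro x
  have hm : n - 1 + 1 = n := Nat.succ_pred_eq_of_pos hn
  have k1 : ∀ y : ℝ, wedgeKernel w p pφ n x 1 y 1 = KAN w p pφ n x y 1 :=
    fun y => (ker_eval w p pφ hp0 hp0ne n x y).1
  have k2 : ∀ y : ℝ, wedgeKernel w p pφ n x 1 1 y = KAN w p pφ n x y (-1) :=
    fun y => (ker_eval w p pφ hp0 hp0ne n x y).2.1
  have k3 : ∀ y : ℝ, wedgeKernel w p pφ n 1 x y 1 = KAN w p pφ n x y (-1) :=
    fun y => (ker_eval w p pφ hp0 hp0ne n x y).2.2.1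
  have k4 : ∀ y : ℝ, wedgeKernel w p pφ n 1 x 1 y = KAN w p pφ n x y 1 :=
    fun y => (ker_eval w p pφ hp0 hp0ne n x y).2.2.2
  unfold wedgePartialSum
  rw [uni_e w p f hif1 hif2 n x, uni_o w pφ f hig1 hig2 (n-1) x, hm]
  constructor
  · simp only [k1, k2]
    rw [edge_int w p pφ n (fun y => f y 1) hif1 hig1 x 1,
      edge_int w p pφ n (fun y => f 1 y) hif2 hig2 x (-1)]
    ring
  · simp only [k3, k4]
    rw [edge_int w p pφ n (fun y => f y 1) hif1 hig1 x (-1),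
      edge_int w p pφ n (fun y => f 1 y) hif2 hig2 x 1]
    ring


end
end
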